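/- Without any causal assumptions, the g-formula and weighting representations coincide as observed-data functionals: for any random variables (X, A, Y, R) satisfying positivity, Σ_x ℙ(X = x | R = false) · E[Y | X = x, A = a, R = true] = (1/ℙ(R = false)) · E[ (ℙ(R = false | X = X(ω)) · 1{R = true, A = a}(ω) / (ℙ(A = a | X = X(ω), R = true) · ℙ(R = true | X = X(ω)))) · Y(ω) ], where the sum runs over x with ℙ(X = x, R = false) > 0. -/

import Mathlib

/-!
On the stratum `X = x` the chain rule
`ℙ(A = a, R = true | X = x) = ℙ(A = a | X = x, R = true) · ℙ(R = true | X = x)`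
collapses the weight to `ℙ(X = x, R = false) / ℙ(X = x, A = a, R = true)`. Splitting the
expectation on the right along the strata of `X` thus turns it into
`Σ_x ℙ(X = x, R = false) · E[Y | X = x, A = a, R = true]`, which is `ℙ(R = false)` times the
g-formula. A stratum with `ℙ(X = x, A = a, R = true) = 0` contributes `0` to both sides, as
division by zero returns `0` and `Y · 1{X = x, A = a, R = true}` vanishes almost surely.
-/

open Finset

attribute [local instance] Classical.propDecidable

variable {Ω : Type*}

/-- Probability of an event. -/
noncomputable def pr [Fintype Ω] (P : Ω → ℝ) (E : Ω → Prop) : ℝ :=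
  ∑ ω, if E ω then P ω else 0

/-- Expectation of a real random variable. -/
noncomputable def ex [Fintype Ω] (P : Ω → ℝ) (Z : Ω → ℝ) : ℝ :=
  ∑ ω, P ω * Z ω

/-- Conditional probability ℙ(F | E) = ℙ(F ∩ E)/ℙ(E). -/
noncomputable def cpr [Fintype Ω] (P : Ω → ℝ) (F E : Ω → Prop) : ℝ :=
  pr P (fun ω => F ω ∧ E ω) / pr P E

/-- Conditional expectation E[Z | E] = E[Z·1_E]/ℙ(E). -/
noncomputable def cex [Fintype Ω] (P : Ω → ℝ) (Z : Ω → ℝ) (E : Ω → Prop) : ℝ :=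
  (∑ ω, if E ω then P ω * Z ω else 0) / pr P E

section
variable [Fintype Ω] (P : Ω → ℝ)

noncomputable def exOn (Z : Ω → ℝ) (E : Ω → Prop) : ℝ :=
  ∑ ω, if E ω then P ω * Z ω else 0

lemma cex_eq_exOn_div (Z : Ω → ℝ) (E : Ω → Prop) : cex P Z E = exOn P Z E / pr P E := rfl

lemma pr_congr {E F : Ω → Prop} (h : ∀ ω, E ω ↔ F ω) : pr P E = pr P F :=
  sum_congr rfl fun ω _ => by rw [h ω]

variable {P}

lemma pr_nonneg (hP : ∀ ω, 0 ≤ P ω) (E : Ω → Prop) : 0 ≤ pr P E :=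
  sum_nonneg fun ω _ => by split <;> simp [hP ω]

lemma pr_mono (hP : ∀ ω, 0 ≤ P ω) {E F : Ω → Prop} (h : ∀ ω, E ω → F ω) :
    pr P E ≤ pr P F :=
  sum_le_sum fun ω _ => by split_ifs <;> simp_all

lemma exOn_eq_zero_of_pr_eq_zero (hP : ∀ ω, 0 ≤ P ω) {E : Ω → Prop} (hE : pr P E = 0)
    (Z : Ω → ℝ) : exOn P Z E = 0 := by
  have hPE : ∀ ω, E ω → P ω = 0 := fun ω hω => by
    have := (sum_eq_zero_iff_of_nonneg fun ω _ => by split <;> simp [hP ω]).1 hE ω (mem_univ ω)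
    simpa [hω] using this
  exact sum_eq_zero fun ω _ => by split_ifs with hω <;> simp [hPE ω, *]

variable (P)

lemma ex_eq_sum_exOn {𝒳 : Type*} [Fintype 𝒳] (X : Ω → 𝒳) (Z : Ω → ℝ) :
    ex P Z = ∑ x, exOn P Z (fun ω => X ω = x) := by
  simp only [ex, exOn]
  rw [sum_comm]
  simp

lemma exOn_congr {E E' : Ω → Prop} (hE : ∀ ω, E ω ↔ E' ω) (Z : Ω → ℝ) :
    exOn P Z E = exOn P Z E' :=
  sum_congr rfl fun ω _ => by rw [hE ω]

lemma exOn_const_mul_indicator {E F : Ω → Prop} {Z Y : Ω → ℝ} (c : ℝ)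
    (hZ : ∀ ω, E ω → Z ω = c * ((if F ω then 1 else 0) * Y ω)) :
    exOn P Z E = c * exOn P Y (fun ω => E ω ∧ F ω) := by
  rw [exOn, exOn, mul_sum]
  refine sum_congr rfl fun ω _ => ?_
  by_cases hE : E ω
  · by_cases hF : F ω <;> simp [hE, hF, hZ ω hE, mul_left_comm]
  · simp [hE]

lemma cpr_and_eq_mul {E G H : Ω → Prop} (hEH : pr P (fun ω => E ω ∧ H ω) ≠ 0) :
    cpr P (fun ω => G ω ∧ H ω) E = cpr P G (fun ω => E ω ∧ H ω) * cpr P H E := by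
  rw [cpr, cpr, cpr, pr_congr P (fun ω => (and_comm : H ω ∧ E ω ↔ _)),
    div_mul_div_cancel₀ hEH]
  exact congrArg (· / _) (pr_congr P fun ω => by tauto)

lemma cpr_div_cpr {E F G : Ω → Prop} (hE : pr P E ≠ 0) :
    cpr P F E / cpr P G E = pr P (fun ω => F ω ∧ E ω) / pr P (fun ω => G ω ∧ E ω) :=
  div_div_div_cancel_right₀ hE _ _

lemma gFormula_term_eq_weighting_term (hP : ∀ ω, 0 ≤ P ω) (E F G H : Ω → Prop) (Y : Ω → ℝ) :
    (if 0 < pr P (fun ω => E ω ∧ F ω) then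
        cpr P E F * cex P Y (fun ω => E ω ∧ G ω ∧ H ω) else 0)
      = (pr P F)⁻¹ * (cpr P F E / (cpr P G (fun ω => E ω ∧ H ω) * cpr P H E)
          * exOn P Y (fun ω => E ω ∧ G ω ∧ H ω)) := by
  set EGH := fun ω => E ω ∧ G ω ∧ H ω
  rcases (pr_nonneg hP EGH).eq_or_lt with hEGH | hEGH
  · simp [cex_eq_exOn_div, exOn_eq_zero_of_pr_eq_zero hP hEGH.symm]
  have hEH : pr P (fun ω => E ω ∧ H ω) ≠ 0 :=
    (hEGH.trans_le (pr_mono hP fun ω h => ⟨h.1, h.2.2⟩)).ne'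
  have hE : pr P E ≠ 0 := (hEGH.trans_le (pr_mono hP fun ω h => h.1)).ne'
  have hweight : cpr P F E / (cpr P G (fun ω => E ω ∧ H ω) * cpr P H E)
      = pr P (fun ω => E ω ∧ F ω) / pr P EGH := by
    rw [← cpr_and_eq_mul P hEH, cpr_div_cpr P hE]
    exact congr_arg₂ (· / ·) (pr_congr P fun ω => and_comm) (pr_congr P fun ω => by tauto)
  rw [hweight, cex_eq_exOn_div, cpr]
  split_ifs with hEF
  · ring
  · simp [le_antisymm (not_lt.mp hEF) (pr_nonneg hP _)]

end

theorem g_formula_eq_weighting_general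
    {𝒳 𝒯 : Type*} [Fintype Ω] [Fintype 𝒳]
    (P : Ω → ℝ) (hP0 : ∀ ω, 0 ≤ P ω)
    (X : Ω → 𝒳) (A : Ω → 𝒯) (Y : Ω → ℝ) (R : Ω → Bool) (a : 𝒯) :
    ∑ x ∈ Finset.univ.filter
          (fun x => 0 < pr P (fun ω => X ω = x ∧ R ω = false)),
        cpr P (fun ω => X ω = x) (fun ω => R ω = false)
          * cex P Y (fun ω => X ω = x ∧ A ω = a ∧ R ω = true)
      = (pr P (fun ω => R ω = false))⁻¹
          * ex P (fun ω =>
              (cpr P (fun ω' => R ω' = false) (fun ω' => X ω' = X ω)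
                  * (if R ω = true ∧ A ω = a then (1 : ℝ) else 0)
                / (cpr P (fun ω' => A ω' = a) (fun ω' => X ω' = X ω ∧ R ω' = true)
                    * cpr P (fun ω' => R ω' = true) (fun ω' => X ω' = X ω)))
              * Y ω) := by
  rw [sum_filter, ex_eq_sum_exOn P X, mul_sum]
  refine sum_congr rfl fun x _ => ?_
  rw [exOn_const_mul_indicator P (F := fun ω => R ω = true ∧ A ω = a) (Y := Y)
      (cpr P (fun ω => R ω = false) (fun ω => X ω = x)
        / (cpr P (fun ω => A ω = a) (fun ω => X ω = x ∧ R ω = true)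
          * cpr P (fun ω => R ω = true) (fun ω => X ω = x)))
      fun ω (hω : X ω = x) => by simp only [hω]; ring,
    exOn_congr P (E' := fun ω => X ω = x ∧ A ω = a ∧ R ω = true) (fun ω => by tauto)]
  exact gFormula_term_eq_weighting_term P hP0 _ _ _ _ Y

/-- Without causal assumptions, the g-formula and the weighting
representation coincide as observed-data functionals. -/
theorem g_formula_eq_weighting
    {𝒳 𝒯 : Type*} [Fintype Ω] [Fintype 𝒳] [Fintype 𝒯]
    (P : Ω → ℝ) (hP0 : ∀ ω, 0 ≤ P ω) (hP1 : ∑ ω, P ω = 1)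
    (X : Ω → 𝒳) (A : Ω → 𝒯) (Y : Ω → ℝ) (R : Ω → Bool) (a : 𝒯)
    -- positivity
    (hposT : 0 < pr P (fun ω => R ω = false))
    (hpos : ∀ x, 0 < pr P (fun ω => X ω = x) →
      0 < pr P (fun ω => A ω = a ∧ X ω = x ∧ R ω = true)) :
    ∑ x ∈ Finset.univ.filter
          (fun x => 0 < pr P (fun ω => X ω = x ∧ R ω = false)),
        cpr P (fun ω => X ω = x) (fun ω => R ω = false)
          * cex P Y (fun ω => X ω = x ∧ A ω = a ∧ R ω = true)
      = (pr P (fun ω => R ω = false))⁻¹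
          * ex P (fun ω =>
              (cpr P (fun ω' => R ω' = false) (fun ω' => X ω' = X ω)
                  * (if R ω = true ∧ A ω = a then (1 : ℝ) else 0)
                / (cpr P (fun ω' => A ω' = a) (fun ω' => X ω' = X ω ∧ R ω' = true)
                    * cpr P (fun ω' => R ω' = true) (fun ω' => X ω' = X ω)))
              * Y ω) :=
  g_formula_eq_weighting_general P hP0 X A Y R a
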